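/- Let L be the skew-symmetric matrix with entries L_{j+2,j} = -L_{j,j+2} = √((j+1)(j+2)) and let μ = ln(q₀)/2 ≠ 0. If the RK4 step size satisfies Δs ≤ 2√2/(N |ln q₀|), then for every eigenvalue iω of μL one has Δs|ω| ≤ 2√2, hence the RK4 iteration h^{n+1} = R(Δs μ L) h^n is L²-stable: ρ(R(Δs μ L)) ≤ 1. -/

import Mathlib

open Matrix

noncomputable def Lmat (N : ℕ) : Matrix (Fin (N + 1)) (Fin (N + 1)) ℝ :=
  Matrix.of fun i j =>
    if (i : ℕ) = (j : ℕ) + 2 then Real.sqrt ((((j : ℕ) : ℝ) + 1) * (((j : ℕ) : ℝ) + 2))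
    else if (j : ℕ) = (i : ℕ) + 2 then -Real.sqrt ((((i : ℕ) : ℝ) + 1) * (((i : ℕ) : ℝ) + 2))
    else 0

-- eigenvector extraction
lemma spec_exists_eigvec {n : Type*} [Fintype n] [DecidableEq n]
    {M : Matrix n n ℂ} {z : ℂ} (hz : z ∈ spectrum ℂ M) :
    ∃ v : n → ℂ, v ≠ 0 ∧ M.mulVec v = z • v := by
  rw [← AlgEquiv.spectrum_eq (Matrix.toLinAlgEquiv' : Matrix n n ℂ ≃ₐ[ℂ] _) M] at hz
  have h := Module.End.hasEigenvalue_iff_mem_spectrum.mpr hz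
  obtain ⟨v, hv⟩ := h.exists_hasEigenvector
  exact ⟨v, hv.right, by simpa using hv.apply_eq_smul⟩

-- spectrum gives eigenvalue of toLin'
lemma spec_hasEigenvalue {n : Type*} [Fintype n] [DecidableEq n]
    {M : Matrix n n ℂ} {z : ℂ} (hz : z ∈ spectrum ℂ M) :
    Module.End.HasEigenvalue (Matrix.toLin' M) z := by
  rw [← AlgEquiv.spectrum_eq (Matrix.toLinAlgEquiv' : Matrix n n ℂ ≃ₐ[ℂ] _) M] at hz
  have h := Module.End.hasEigenvalue_iff_mem_spectrum.mpr hz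
  have : (Matrix.toLinAlgEquiv' M : Module.End ℂ (n → ℂ)) = Matrix.toLin' M := by
    rfl
  rwa [this] at h

lemma skew_spec_re_zero {n : Type*} [Fintype n] [DecidableEq n]
    {M : Matrix n n ℝ} (hM : Mᵀ = -M) {z : ℂ}
    (hz : z ∈ spectrum ℂ (M.map (Complex.ofReal ·))) : z.re = 0 := by
  obtain ⟨v, hv0, heig⟩ := spec_exists_eigvec hz
  set M' := M.map (Complex.ofReal ·) with hM'
  have hH : M'ᴴ = -M' := by
    ext i j
    have h1 : M j i = -M i j := by
      have := congrFun (congrFun hM i) j; simpa using this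
    simp [hM', Matrix.conjTranspose_apply, Matrix.map_apply, h1]
  set nn : ℂ := star v ⬝ᵥ v with hnn
  have hnnr : nn = ((∑ i, Complex.normSq (v i) : ℝ) : ℂ) := by
    rw [hnn]
    push_cast
    refine Finset.sum_congr rfl fun i _ => ?_
    simp [Pi.star_apply, Complex.normSq_eq_conj_mul_self]
  have hnn0 : nn ≠ 0 := by
    rw [hnnr]
    norm_cast
    have : 0 < ∑ i, Complex.normSq (v i) := by
      obtain ⟨i, hi⟩ := Function.ne_iff.mp hv0
      exact Finset.sum_pos' (fun j _ => Complex.normSq_nonneg _)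
        ⟨i, Finset.mem_univ i, by simpa [Complex.normSq_pos] using hi⟩
    exact ne_of_gt this
  have hs : star v ⬝ᵥ M'.mulVec v = z * nn := by
    rw [heig, dotProduct_smul, hnn, smul_eq_mul]
  have hs2 : star (star v ⬝ᵥ M'.mulVec v) = -(z * nn) := by
    rw [Matrix.star_dotProduct, star_star, Matrix.star_mulVec, hH]
    rw [Matrix.vecMul_neg, neg_dotProduct, ← Matrix.dotProduct_mulVec, hs]
  rw [hs, hnnr, star_mul'] at hs2
  simp only [Complex.star_def, Complex.conj_ofReal] at hs2
  have h2 : ((starRingEnd ℂ) z + z) * ((∑ i, Complex.normSq (v i) : ℝ) : ℂ) = 0 := by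
    linear_combination hs2
  have hr0 : ((∑ i, Complex.normSq (v i) : ℝ) : ℂ) ≠ 0 := hnnr ▸ hnn0
  have hzz : (starRingEnd ℂ) z + z = 0 :=
    (mul_eq_zero.mp h2).resolve_right hr0
  have := congrArg Complex.re hzz
  simp only [Complex.add_re, Complex.conj_re, Complex.zero_re] at this
  linarith

lemma Lmat_row_sum (N : ℕ) (k : Fin (N + 1)) :
    ∑ j : Fin (N + 1), |Lmat N k j| ≤ 2 * N := by
  classical
  set f : Fin (N + 1) → ℝ := fun j => |Lmat N k j| with hf
  have hsupp : ∀ j ∈ Finset.univ, f j ≠ 0 →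
      ((k : ℕ) = (j : ℕ) + 2 ∨ (j : ℕ) = (k : ℕ) + 2) := by
    intro j _ hj
    by_contra h
    push_neg at h
    apply hj
    simp [hf, Lmat, Matrix.of_apply, h.1, h.2]
  have hbound : ∀ j ∈ Finset.univ.filter
      (fun j : Fin (N+1) => (k : ℕ) = (j : ℕ) + 2 ∨ (j : ℕ) = (k : ℕ) + 2),
      f j ≤ (N : ℝ) := by
    intro j _
    have hjN : ((j : ℕ) : ℝ) ≤ N := by exact_mod_cast Nat.le_of_lt_succ j.isLt
    have hkN : ((k : ℕ) : ℝ) ≤ N := by exact_mod_cast Nat.le_of_lt_succ k.isLt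
    have hN0 : (0 : ℝ) ≤ N := Nat.cast_nonneg N
    simp only [hf, Lmat, Matrix.of_apply]
    split_ifs with h1 h2
    · -- k = j + 2, entry √((j+1)(j+2))
      have hj2 : ((j : ℕ) : ℝ) + 2 ≤ N := by
        have hk' := Nat.le_of_lt_succ k.isLt
        have : (j : ℕ) + 2 ≤ N := by omega
        exact_mod_cast this
      rw [abs_of_nonneg (Real.sqrt_nonneg _)]
      calc Real.sqrt ((((j : ℕ) : ℝ) + 1) * (((j : ℕ) : ℝ) + 2))
          ≤ Real.sqrt ((N : ℝ) * N) := by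
            apply Real.sqrt_le_sqrt; nlinarith
        _ = N := by rw [Real.sqrt_mul_self hN0]
    · have hk2 : ((k : ℕ) : ℝ) + 2 ≤ N := by
        have : (k : ℕ) + 2 ≤ N := by omega
        exact_mod_cast this
      rw [abs_neg, abs_of_nonneg (Real.sqrt_nonneg _)]
      calc Real.sqrt ((((k : ℕ) : ℝ) + 1) * (((k : ℕ) : ℝ) + 2))
          ≤ Real.sqrt ((N : ℝ) * N) := by
            apply Real.sqrt_le_sqrt; nlinarith
        _ = N := by rw [Real.sqrt_mul_self hN0]
    · simpa using hN0
  have hcard : (Finset.univ.filter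
      (fun j : Fin (N+1) => (k : ℕ) = (j : ℕ) + 2 ∨ (j : ℕ) = (k : ℕ) + 2)).card ≤ 2 := by
    rw [Finset.filter_or]
    refine le_trans (Finset.card_union_le _ _) ?_
    have c1 : (Finset.univ.filter (fun j : Fin (N+1) => (k : ℕ) = (j : ℕ) + 2)).card ≤ 1 := by
      apply Finset.card_le_one.mpr
      intro a ha b hb
      simp only [Finset.mem_filter] at ha hb
      exact Fin.ext (by omega)
    have c2 : (Finset.univ.filter (fun j : Fin (N+1) => (j : ℕ) = (k : ℕ) + 2)).card ≤ 1 := by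
      apply Finset.card_le_one.mpr
      intro a ha b hb
      simp only [Finset.mem_filter] at ha hb
      exact Fin.ext (by omega)
    omega
  calc ∑ j, f j
      = ∑ j ∈ Finset.univ.filter
          (fun j : Fin (N+1) => (k : ℕ) = (j : ℕ) + 2 ∨ (j : ℕ) = (k : ℕ) + 2), f j :=
        (Finset.sum_filter_of_ne hsupp).symm
    _ ≤ (Finset.univ.filter
          (fun j : Fin (N+1) => (k : ℕ) = (j : ℕ) + 2 ∨ (j : ℕ) = (k : ℕ) + 2)).card • (N : ℝ) :=
        Finset.sum_le_card_nsmul _ _ _ hbound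
    _ ≤ 2 * N := by
        rw [nsmul_eq_mul]
        have := hcard
        have hN0 : (0 : ℝ) ≤ N := Nat.cast_nonneg N
        calc (_ : ℝ) ≤ (2 : ℕ) * (N : ℝ) := by
              apply mul_le_mul_of_nonneg_right _ hN0
              exact_mod_cast hcard
          _ = 2 * N := by norm_num

lemma Lmat_spec_bound (N : ℕ) (c : ℝ) {z : ℂ}
    (hz : z ∈ spectrum ℂ (((c • Lmat N).map (Complex.ofReal ·)))) :
    ‖z‖ ≤ |c| * (2 * N) := by
  classical
  obtain ⟨k, hk⟩ := eigenvalue_mem_ball (spec_hasEigenvalue hz)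
  have hdiag : ((c • Lmat N).map (Complex.ofReal ·)) k k = 0 := by
    simp [Lmat, Matrix.map_apply, Matrix.smul_apply]
  rw [hdiag, Metric.mem_closedBall, dist_zero_right] at hk
  have hnorm : ∀ j, ‖((c • Lmat N).map (Complex.ofReal ·)) k j‖ = |c| * |Lmat N k j| := by
    intro j
    simp [Matrix.map_apply, Matrix.smul_apply, Complex.norm_real, abs_mul,
      Real.norm_eq_abs]
  calc ‖z‖ = ‖z‖ := rfl
    _ ≤ ∑ j ∈ Finset.univ.erase k, ‖((c • Lmat N).map (Complex.ofReal ·)) k j‖ := hk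
    _ ≤ ∑ j : Fin (N + 1), ‖((c • Lmat N).map (Complex.ofReal ·)) k j‖ :=
        Finset.sum_le_sum_of_subset_of_nonneg (Finset.erase_subset _ _)
          (fun j _ _ => norm_nonneg _)
    _ = |c| * ∑ j, |Lmat N k j| := by
        rw [Finset.mul_sum]; exact Finset.sum_congr rfl fun j _ => hnorm j
    _ ≤ |c| * (2 * N) := by
        apply mul_le_mul_of_nonneg_left (Lmat_row_sum N k) (abs_nonneg c)

lemma Lmat_transpose (N : ℕ) (c : ℝ) : (c • Lmat N)ᵀ = -(c • Lmat N) := by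
  ext i j
  simp only [Matrix.transpose_apply, Matrix.neg_apply, Matrix.smul_apply, smul_eq_mul,
    Lmat, Matrix.of_apply]
  split_ifs <;> first | omega | ring

lemma R_abs_le_one {w : ℂ} (hre : w.re = 0) (habs : ‖w‖ ≤ 2 * Real.sqrt 2) :
    ‖1 + w + (1/2 : ℂ) * w^2 + (1/6 : ℂ) * w^3 + (1/24 : ℂ) * w^4‖ ≤ 1 := by
  set x : ℝ := w.im with hx
  have hx2 : x ^ 2 ≤ 8 := by
    have h1 : |x| ≤ 2 * Real.sqrt 2 := le_trans (Complex.abs_im_le_norm w) habs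
    have h2 : (2 * Real.sqrt 2) ^ 2 = 8 := by
      rw [mul_pow, Real.sq_sqrt (by norm_num : (2:ℝ) ≥ 0)]; norm_num
    calc x ^ 2 = |x| ^ 2 := (sq_abs x).symm
      _ ≤ (2 * Real.sqrt 2) ^ 2 := by
          apply pow_le_pow_left₀ (abs_nonneg x) h1
      _ = 8 := h2
  have hw : w = (x : ℝ) * Complex.I := by
    apply Complex.ext <;> simp [hre, hx]
  have hz : 1 + w + (1/2 : ℂ) * w^2 + (1/6 : ℂ) * w^3 + (1/24 : ℂ) * w^4
      = ((1 - x^2/2 + x^4/24 : ℝ) : ℂ) + ((x - x^3/6 : ℝ) : ℂ) * Complex.I := by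
    rw [hw]
    have h2 : ((x:ℂ) * Complex.I)^2 = -(x:ℂ)^2 := by
      rw [mul_pow, Complex.I_sq]; ring
    have h3 : ((x:ℂ) * Complex.I)^3 = -(x:ℂ)^3 * Complex.I := by
      rw [mul_pow, show (3:ℕ)=2+1 from rfl]
      simp only [pow_add, Complex.I_sq, pow_one]; ring
    have h4 : ((x:ℂ) * Complex.I)^4 = (x:ℂ)^4 := by
      rw [mul_pow, show (4:ℕ)=2+2 from rfl]
      simp only [pow_add, Complex.I_sq]; ring
    rw [h2, h3, h4]
    push_cast
    ring
  rw [hz]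
  have hsq : ‖((1 - x^2/2 + x^4/24 : ℝ) : ℂ) + ((x - x^3/6 : ℝ) : ℂ) * Complex.I‖ ^ 2
      = (1 - x^2/2 + x^4/24)^2 + (x - x^3/6)^2 := by
    rw [Complex.sq_norm, Complex.normSq_add_mul_I]
  have h6 : (0:ℝ) ≤ x^6 * (8 - x^2) := mul_nonneg (by positivity) (by linarith)
  have hle : (1 - x^2/2 + x^4/24)^2 + (x - x^3/6)^2 ≤ 1 := by nlinarith [h6]
  nlinarith [hsq, hle, norm_nonneg (((1 - x^2/2 + x^4/24 : ℝ) : ℂ) + ((x - x^3/6 : ℝ) : ℂ) * Complex.I)]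

theorem RK4_scaling_projection_stability (N : ℕ) (hN : 2 ≤ N)
    (q₀ Δs : ℝ) (hq₀ : 0 < q₀) (hq₀' : q₀ ≠ 1) (hΔs : 0 < Δs)
    (hstep : Δs ≤ 2 * Real.sqrt 2 / (N * |Real.log q₀|))
    (μ : ℝ) (hμ : μ = Real.log q₀ / 2)
    (A : Matrix (Fin (N + 1)) (Fin (N + 1)) ℝ) (hA : A = (Δs * μ) • Lmat N)
    (Rm : Matrix (Fin (N + 1)) (Fin (N + 1)) ℝ)
    (hRm : Rm = 1 + A + (1 / 2 : ℝ) • (A * A) + (1 / 6 : ℝ) • (A * A * A) +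
      (1 / 24 : ℝ) • (A * A * A * A)) :
    (∀ z ∈ spectrum ℂ ((μ • Lmat N).map (Complex.ofReal ·)),
      Δs * ‖z‖ ≤ 2 * Real.sqrt 2) ∧
    (∀ z ∈ spectrum ℂ (Rm.map (Complex.ofReal ·)), ‖z‖ ≤ 1) := by
  have hlog : Real.log q₀ ≠ 0 := by
    intro h
    rcases Real.log_eq_zero.mp h with h | h | h
    · exact absurd h (ne_of_gt hq₀)
    · exact hq₀' h
    · linarith
  have hlogpos : 0 < |Real.log q₀| := abs_pos.mpr hlog
  have hNpos : (0 : ℝ) < N := by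
    have : 0 < N := by omega
    exact_mod_cast this
  have hNlog : 0 < (N : ℝ) * |Real.log q₀| := mul_pos hNpos hlogpos
  have hkey : Δs * ((N : ℝ) * |Real.log q₀|) ≤ 2 * Real.sqrt 2 :=
    (le_div_iff₀ hNlog).mp hstep
  have hμabs : |μ| * (2 * N) = (N : ℝ) * |Real.log q₀| := by
    rw [hμ, abs_div]
    simp only [abs_two]
    ring
  constructor
  · intro z hz
    have hb := Lmat_spec_bound N μ hz
    calc Δs * ‖z‖ ≤ Δs * (|μ| * (2 * N)) :=
          mul_le_mul_of_nonneg_left hb (le_of_lt hΔs)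
      _ = Δs * ((N : ℝ) * |Real.log q₀|) := by rw [hμabs]
      _ ≤ 2 * Real.sqrt 2 := hkey
  · intro z hz
    set A' : Matrix (Fin (N + 1)) (Fin (N + 1)) ℂ := A.map (Complex.ofReal ·) with hA'
    -- the RK4 stability polynomial
    set p : Polynomial ℂ := Polynomial.C (1/24 : ℂ) * Polynomial.X ^ 4 +
      Polynomial.C (1/6 : ℂ) * Polynomial.X ^ 3 + Polynomial.C (1/2 : ℂ) * Polynomial.X ^ 2 +
      Polynomial.X + 1 with hp
    have hdeg : 0 < p.degree := by
      have h4 : p.degree = 4 := by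
        rw [hp]
        compute_degree!
      rw [h4]
      norm_num
    have hmm : ∀ (M P : Matrix (Fin (N + 1)) (Fin (N + 1)) ℝ),
        (M * P).map (Complex.ofReal ·) = M.map (Complex.ofReal ·) * P.map (Complex.ofReal ·) := by
      intro M P
      exact map_mul ((algebraMap ℝ ℂ).mapMatrix) M P
    have hms : ∀ (c : ℝ) (M : Matrix (Fin (N + 1)) (Fin (N + 1)) ℝ),
        (c • M).map (Complex.ofReal ·) = (c : ℂ) • M.map (Complex.ofReal ·) := by
      intro c M
      ext i j
      simp [Matrix.map_apply, Matrix.smul_apply]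
    have hone : (1 : Matrix (Fin (N + 1)) (Fin (N + 1)) ℝ).map (Complex.ofReal ·) = 1 :=
      map_one ((algebraMap ℝ ℂ).mapMatrix)
    have hadd : ∀ (M P : Matrix (Fin (N + 1)) (Fin (N + 1)) ℝ),
        (M + P).map (Complex.ofReal ·) = M.map (Complex.ofReal ·) + P.map (Complex.ofReal ·) := by
      intro M P
      exact map_add ((algebraMap ℝ ℂ).mapMatrix) M P
    have haeval : Rm.map (Complex.ofReal ·) = Polynomial.aeval A' p := by
      rw [hRm, hadd, hadd, hadd, hadd, hone, hms, hms, hms, hmm, hmm, hmm, hmm, hmm, hmm]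
      rw [hp]
      simp only [_root_.map_add, _root_.map_mul, _root_.map_pow, Polynomial.aeval_X,
        Polynomial.aeval_C, _root_.map_one, Algebra.algebraMap_eq_smul_one, smul_mul_assoc,
        one_mul]
      rw [show A' ^ 2 = A' * A' from sq A', show A' ^ 3 = A' * A' * A' by rw [pow_succ, sq],
        show A' ^ 4 = A' * A' * A' * A' by rw [pow_succ, pow_succ, sq]]
      push_cast
      abel
    rw [haeval, spectrum.map_polynomial_aeval_of_degree_pos A' p hdeg] at hz
    obtain ⟨w, hw, hev⟩ := hz
    have hwspec : w ∈ spectrum ℂ (((Δs * μ) • Lmat N).map (Complex.ofReal ·)) := by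
      rwa [hA', hA] at hw
    have hwabs : ‖w‖ ≤ 2 * Real.sqrt 2 := by
      have hb := Lmat_spec_bound N (Δs * μ) hwspec
      calc ‖w‖ ≤ |Δs * μ| * (2 * N) := hb
        _ = Δs * (|μ| * (2 * N)) := by rw [abs_mul, abs_of_pos hΔs]; ring
        _ = Δs * ((N : ℝ) * |Real.log q₀|) := by rw [hμabs]
        _ ≤ 2 * Real.sqrt 2 := hkey
    have hwre : w.re = 0 := skew_spec_re_zero (Lmat_transpose N (Δs * μ)) hwspec
    have heval : Polynomial.eval w p
        = 1 + w + (1/2 : ℂ) * w^2 + (1/6 : ℂ) * w^3 + (1/24 : ℂ) * w^4 := by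
      rw [hp]
      simp only [Polynomial.eval_add, Polynomial.eval_mul, Polynomial.eval_pow,
        Polynomial.eval_C, Polynomial.eval_X, Polynomial.eval_one]
      ring
    have hev' : Polynomial.eval w p = z := hev
    rw [← hev', heval]
    exact R_abs_le_one hwre hwabs
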